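/- Let β₃, β₄, α₁, b₂, b₄, b₆ be real numbers and set q = α₁ + β₃/2. Define Δ₂(z) for z ∈ ℝ by Δ₂ = u₂₀ − (1/2)u₁₀² z + z u₁₀ {k₁ + (1/6)k₃(z² − 3)} − (1/2)(k₂ + k₁²) z − ((1/24)k₄ + (1/6)k₁ k₃)(z³ − 3z) − (1/72)k₃²(z⁵ − 10z³ + 15z), where R₁₀ = −β₃/2, R₂₀ = b₂ − α₁ q + q²/2, R₃₀ = β₃/3, R₄₀ = b₄ − (β₃/3) q, R₆₀ = b₆, u₁₀ = R₁₀ + R₃₀(z² + 2), u₂₀ = 2 u₁₀ z R₃₀ − (1/2) u₁₀² z + R₂₀ z + R₄₀(z³ + 3z) + R₆₀(z⁵ + 5z³ + 15z), k₁ = β₃/2, k₂ = 3 + (7/4)β₃² + ((2/3)z² + 1/3)(β₄ − 3 − (3/2)β₃²), k₃ = 2β₃, k₄ = 12 + 12β₃² − 2β₄. Then Δ₂(z) = 0 for every real z if and only if b₂ = (1/2)α₁² + (5/8)β₃² − (1/3)β₄ + 1, b₄ = (1/3)β₃ α₁ − (1/2)β₃² + (1/4)β₄ − 1/2, and b₆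 = (1/18)β₃². -/

import Mathlib

/-! `Δ₂(z)` is affine in `(b₂, b₄, b₆)`, which enter only through `R₂₀ z`, `R₄₀ (z³ + 3z)` and
`R₆₀ (z⁵ + 5z³ + 15z)`. Collecting terms, `Δ₂(z)` is the combination of these three odd
polynomials whose coefficients are the differences between the two sides of the three matching
conditions, and the three polynomials are linearly independent (already at `z = 1, 2, 3`). -/

theorem odd_quintic_eq_zero_iff {K : Type*} [Field K] [CharZero K] (a b c : K) :
    (∀ z : K, a * z + b * (z ^ 3 + 3 * z) + c * (z ^ 5 + 5 * z ^ 3 + 15 * z) = 0) ↔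
      a = 0 ∧ b = 0 ∧ c = 0 := by
  refine ⟨fun h => ?_, fun ⟨ha, hb, hc⟩ z => by simp [ha, hb, hc]⟩
  have h1 := h 1
  have h2 := h 2
  have h3 := h 3
  norm_num at h1 h2 h3
  -- the coefficients are the rows of the inverse of the evaluation matrix at `z = 1, 2, 3`
  exact ⟨by linear_combination (25 / 8 : K) * h1 - (13 / 10 : K) * h2 + (19 / 120 : K) * h3,
    by linear_combination (-3 / 4 : K) * h1 + (1 / 2 : K) * h2 - (1 / 12 : K) * h3,
    by linear_combination (1 / 24 : K) * h1 - (1 / 30 : K) * h2 + (1 / 120 : K) * h3⟩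

/-- Second-order probability matching conditions (27): under the first-order
conditions (25) with the prior (26), `Δ₂(z) = 0` for all `z` iff the coefficient
functions of the likelihood satisfy (27). -/
theorem second_order_matching_conditions (β₃ β₄ α₁ b₂ b₄ b₆ : ℝ) :
    let q := α₁ + β₃ / 2
    let R₁₀ := -β₃ / 2
    let R₂₀ := b₂ - α₁ * q + q ^ 2 / 2
    let R₃₀ := β₃ / 3
    let R₄₀ := b₄ - (β₃ / 3) * q
    let R₆₀ := b₆
    let u₁₀ : ℝ → ℝ := fun z => R₁₀ + R₃₀ * (z ^ 2 + 2)
    let u₂₀ : ℝ → ℝ := fun z => 2 * u₁₀ z * z * R₃₀ - (1 / 2) * (u₁₀ z) ^ 2 * z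
      + R₂₀ * z + R₄₀ * (z ^ 3 + 3 * z) + R₆₀ * (z ^ 5 + 5 * z ^ 3 + 15 * z)
    let k₁ := β₃ / 2
    let k₂ : ℝ → ℝ := fun z => 3 + (7 / 4) * β₃ ^ 2
      + ((2 / 3) * z ^ 2 + 1 / 3) * (β₄ - 3 - (3 / 2) * β₃ ^ 2)
    let k₃ := 2 * β₃
    let k₄ := 12 + 12 * β₃ ^ 2 - 2 * β₄
    let Δ₂ : ℝ → ℝ := fun z => u₂₀ z - (1 / 2) * (u₁₀ z) ^ 2 * z
      + z * u₁₀ z * (k₁ + (1 / 6) * k₃ * (z ^ 2 - 3))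
      - (1 / 2) * (k₂ z + k₁ ^ 2) * z
      - ((1 / 24) * k₄ + (1 / 6) * k₁ * k₃) * (z ^ 3 - 3 * z)
      - (1 / 72) * k₃ ^ 2 * (z ^ 5 - 10 * z ^ 3 + 15 * z)
    ((∀ z : ℝ, Δ₂ z = 0) ↔
      (b₂ = (1 / 2) * α₁ ^ 2 + (5 / 8) * β₃ ^ 2 - (1 / 3) * β₄ + 1 ∧
        b₄ = (1 / 3) * β₃ * α₁ - (1 / 2) * β₃ ^ 2 + (1 / 4) * β₄ - 1 / 2 ∧
        b₆ = (1 / 18) * β₃ ^ 2)) := by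
  intro q R₁₀ R₂₀ R₃₀ R₄₀ R₆₀ u₁₀ u₂₀ k₁ k₂ k₃ k₄ Δ₂
  have hΔ₂ : ∀ z, Δ₂ z = (b₂ - ((1 / 2) * α₁ ^ 2 + (5 / 8) * β₃ ^ 2 - (1 / 3) * β₄ + 1)) * z
      + (b₄ - ((1 / 3) * β₃ * α₁ - (1 / 2) * β₃ ^ 2 + (1 / 4) * β₄ - 1 / 2)) * (z ^ 3 + 3 * z)
      + (b₆ - (1 / 18) * β₃ ^ 2) * (z ^ 5 + 5 * z ^ 3 + 15 * z) := fun z => by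
    simp only [Δ₂, u₂₀, u₁₀, k₂, q, R₁₀, R₂₀, R₃₀, R₄₀, R₆₀, k₁, k₃, k₄]
    ring
  simp only [hΔ₂, odd_quintic_eq_zero_iff, sub_eq_zero]
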